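/- arXiv:1106.1979 — 5 statements merged into one kernel-verified Lean document; each statement's English description precedes it below -/
import Mathlib

section
/- Given a diagram in a category consisting of two parallel pairs (f1,g1): A ⇉ B and (f2,g2): D ⇉ E with morphisms h1: B → C, h2: E → F, vertical parallel pairs (a1,b1): A ⇉ D, (a2,b2): B ⇉ E, (a3,b3): C ⇉ F and c: F → H, such that: (i) h1 coequalises (f1,g1), h2 coequalises (f2,g2), and c coequalises (a3,b3); (ii) the pair (a1,b1) has a common section and the pair (f1,g1) has a common section; (iii) f2∘a1 = a2∘f1, g2∘b1 = b2∘g1, h2∘a2 = a3∘h1, and h2∘b2 = b3∘h1; then c∘h2 is a coequaliser of the parallel pair (f2∘a1, g2∘b1): A ⇉ F. -/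
open CategoryTheory Limits

universe v u

/-- The 3×3-lemma for reflexive coequalisers. -/
theorem three_by_three_lemma {𝒞 : Type u} [Category.{v} 𝒞]
    {A B C D E F H : 𝒞}
    (f₁ g₁ : A ⟶ B) (h₁ : B ⟶ C) (f₂ g₂ : D ⟶ E) (h₂ : E ⟶ F)
    (a₁ b₁ : A ⟶ D) (a₂ b₂ : B ⟶ E) (a₃ b₃ : C ⟶ F) (c : F ⟶ H)
    -- (i) the two top rows and the right-most column are coequalisers
    (e₁ : f₁ ≫ h₁ = g₁ ≫ h₁) (hh₁ : Nonempty (IsColimit (Cofork.ofπ h₁ e₁)))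
    (e₂ : f₂ ≫ h₂ = g₂ ≫ h₂) (hh₂ : Nonempty (IsColimit (Cofork.ofπ h₂ e₂)))
    (e₃ : a₃ ≫ c = b₃ ≫ c) (hc : Nonempty (IsColimit (Cofork.ofπ c e₃)))
    -- (ii) common sections
    (s : D ⟶ A) (hs₁ : s ≫ a₁ = 𝟙 D) (hs₂ : s ≫ b₁ = 𝟙 D)
    (t : B ⟶ A) (ht₁ : t ≫ f₁ = 𝟙 B) (ht₂ : t ≫ g₁ = 𝟙 B)
    -- (iii) commutativities
    (w₁ : a₁ ≫ f₂ = f₁ ≫ a₂) (w₂ : b₁ ≫ g₂ = g₁ ≫ b₂)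
    (w₃ : a₂ ≫ h₂ = h₁ ≫ a₃) (w₄ : b₂ ≫ h₂ = h₁ ≫ b₃) :
    ∃ e : (a₁ ≫ f₂) ≫ h₂ ≫ c = (b₁ ≫ g₂) ≫ h₂ ≫ c,
      Nonempty (IsColimit (Cofork.ofπ (h₂ ≫ c) e)) := by
  obtain ⟨H₁⟩ := hh₁
  obtain ⟨H₂⟩ := hh₂
  obtain ⟨Hc⟩ := hc
  have L1 : (a₁ ≫ f₂) ≫ h₂ = (f₁ ≫ h₁) ≫ a₃ := by
    rw [w₁, Category.assoc, w₃, Category.assoc]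
  have L2 : (b₁ ≫ g₂) ≫ h₂ = (g₁ ≫ h₁) ≫ b₃ := by
    rw [w₂, Category.assoc, w₄, Category.assoc]
  have e : (a₁ ≫ f₂) ≫ h₂ ≫ c = (b₁ ≫ g₂) ≫ h₂ ≫ c := by
    rw [← Category.assoc, L1, ← Category.assoc, L2, ← e₁]
    simp only [Category.assoc, e₃]
  -- for any cocone `sc`, its π coequalises (f₂, g₂)
  have key : ∀ {Z : 𝒞} (m : E ⟶ Z), (a₁ ≫ f₂) ≫ m = (b₁ ≫ g₂) ≫ m →
      f₂ ≫ m = g₂ ≫ m := by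
    intro Z m hm
    calc f₂ ≫ m = s ≫ (a₁ ≫ f₂) ≫ m := by rw [← Category.assoc, ← Category.assoc, hs₁]; simp
    _ = s ≫ (b₁ ≫ g₂) ≫ m := by rw [hm]
    _ = g₂ ≫ m := by rw [← Category.assoc, ← Category.assoc, hs₂]; simp
  have key2 : ∀ {Z : 𝒞} (m : E ⟶ Z), (a₁ ≫ f₂) ≫ m = (b₁ ≫ g₂) ≫ m →
      a₂ ≫ m = b₂ ≫ m := by
    intro Z m hm
    calc a₂ ≫ m = t ≫ (f₁ ≫ a₂) ≫ m := by rw [← Category.assoc, ← Category.assoc, ht₁]; simp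
    _ = t ≫ (a₁ ≫ f₂) ≫ m := by rw [w₁]
    _ = t ≫ (b₁ ≫ g₂) ≫ m := by rw [hm]
    _ = t ≫ (g₁ ≫ b₂) ≫ m := by rw [w₂]
    _ = b₂ ≫ m := by rw [← Category.assoc, ← Category.assoc, ht₂]; simp
  have cond : ∀ sc : Cofork (a₁ ≫ f₂) (b₁ ≫ g₂),
      a₃ ≫ Cofork.IsColimit.desc H₂ sc.π (key sc.π sc.condition)
        = b₃ ≫ Cofork.IsColimit.desc H₂ sc.π (key sc.π sc.condition) := by
    intro sc
    apply Cofork.IsColimit.hom_ext H₁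
    simp only [Cofork.π_ofπ, ← Category.assoc, ← w₃, ← w₄]
    have h3 := Cofork.IsColimit.π_desc' H₂ sc.π (key sc.π sc.condition)
    rw [Cofork.π_ofπ] at h3
    simp only [Category.assoc, h3]
    exact key2 sc.π sc.condition
  refine ⟨e, ⟨Cofork.IsColimit.mk _
    (fun sc => Cofork.IsColimit.desc Hc
      (Cofork.IsColimit.desc H₂ sc.π (key sc.π sc.condition)) (cond sc))
    (fun sc => ?_) (fun sc m hm => ?_)⟩⟩
  · have h2 := Cofork.IsColimit.π_desc' Hc
      (Cofork.IsColimit.desc H₂ sc.π (key sc.π sc.condition)) (cond sc)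
    have h3 := Cofork.IsColimit.π_desc' H₂ sc.π (key sc.π sc.condition)
    simp only [Cofork.π_ofπ] at h2 h3 ⊢
    rw [Category.assoc, h2, h3]
  · apply Cofork.IsColimit.hom_ext Hc
    apply Cofork.IsColimit.hom_ext H₂
    have h2 := Cofork.IsColimit.π_desc' Hc
      (Cofork.IsColimit.desc H₂ sc.π (key sc.π sc.condition)) (cond sc)
    have h3 := Cofork.IsColimit.π_desc' H₂ sc.π (key sc.π sc.condition)
    simp only [Cofork.π_ofπ] at h2 h3 hm ⊢
    rw [← Category.assoc, ← Category.assoc, hm, Category.assoc, h2, h3]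
end

section
/- Let V be a category with coproducts and an initial object, and W a category with coproducts. For a coproduct-preserving functor R : V → W, the induced functor GR : GV → GW on enriched graphs (applying R to each hom) is both distributive and path-like. -/
open CategoryTheory Limits

noncomputable section

universe v₁ v₂ v₃ u₁ u₂ u₃

/-- A `V`-enriched graph: a set of objects together with a `V`-object of arrows
between any ordered pair of objects. -/
structure VGraph (V : Type u₁) [Category.{v₁} V] : Type (u₁ + 1) where
  objs : Type
  hom : objs → objs → V

variable {V : Type u₁} [Category.{v₁} V] {W : Type u₂} [Category.{v₂} W]
  {Y : Type u₃} [Category.{v₃} Y]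

/-- A morphism of `V`-enriched graphs. -/
structure GHom (X Z : VGraph V) : Type (max 1 v₁) where
  obj : X.objs → Z.objs
  map : ∀ a b : X.objs, X.hom a b ⟶ Z.hom (obj a) (obj b)

/-- The identity morphism of `V`-graphs. -/
def GHom.id (X : VGraph V) : GHom X X := ⟨fun a => a, fun _ _ => 𝟙 _⟩

/-- Composition of morphisms of `V`-graphs. -/
def GHom.comp {X Z T : VGraph V} (F : GHom X Z) (G : GHom Z T) : GHom X T :=
  ⟨fun a => G.obj (F.obj a), fun a b => F.map a b ≫ G.map (F.obj a) (F.obj b)⟩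

/-- A functor `GV ⥤ GW` over `Set`: it assigns to every `V`-graph `X` a `W`-graph with
the same set of objects (recorded by its homs only), functorially. -/
structure OverSetFunctor (V : Type u₁) [Category.{v₁} V] (W : Type u₂) [Category.{v₂} W] where
  hom : ∀ X : VGraph V, X.objs → X.objs → W
  map : ∀ {X Z : VGraph V} (F : GHom X Z) (a b : X.objs),
    hom X a b ⟶ hom Z (F.obj a) (F.obj b)
  map_id : ∀ (X : VGraph V) (a b : X.objs), map (GHom.id X) a b = 𝟙 (hom X a b)
  map_comp : ∀ {X Z T : VGraph V} (F : GHom X Z) (G : GHom Z T) (a b : X.objs),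
    map (F.comp G) a b = map F a b ≫ map G (F.obj a) (F.obj b)

section Seq
variable [HasInitial V]

/-- The `V`-graph associated to a finite sequence `(Z₁,…,Zₙ)` of objects of `V`:
objects `{0,…,n}`, hom from `i-1` to `i` equal to `Zᵢ`, all other homs initial. -/
abbrev seqGraph {n : ℕ} (Z : Fin n → V) : VGraph V :=
  ⟨Fin (n + 1), fun i j =>
    if h : (j : ℕ) = (i : ℕ) + 1 then Z ⟨(i : ℕ), by have := j.isLt; omega⟩ else ⊥_ V⟩

/-- The functor `T̄ₙ` associated to a functor over `Set`:
`T̄(Z₁,…,Zₙ) = T(Z₁,…,Zₙ)(0,n)`. -/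
def tbar (T : OverSetFunctor V W) {n : ℕ} (Z : Fin n → V) : W :=
  T.hom (seqGraph Z) 0 (Fin.last n)

theorem seqGraph_hom_pos {n : ℕ} (Z : Fin n → V) (a b : Fin (n + 1))
    (h : (b : ℕ) = (a : ℕ) + 1) :
    (seqGraph Z).hom a b = Z ⟨(a : ℕ), by have := b.isLt; omega⟩ := dif_pos h

theorem seqGraph_hom_neg {n : ℕ} (Z : Fin n → V) (a b : Fin (n + 1))
    (h : ¬(b : ℕ) = (a : ℕ) + 1) :
    (seqGraph Z).hom a b = ⊥_ V := dif_neg h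

/-- The morphism of sequence graphs induced by a family of morphisms. -/
def seqGHom {n : ℕ} {Z Z' : Fin n → V} (g : ∀ k, Z k ⟶ Z' k) :
    GHom (seqGraph Z) (seqGraph Z') where
  obj := fun a => a
  map a b :=
    if h : (b : ℕ) = (a : ℕ) + 1 then
      eqToHom (seqGraph_hom_pos Z a b h) ≫ g ⟨(a : ℕ), by have := b.isLt; omega⟩ ≫
        eqToHom (seqGraph_hom_pos Z' a b h).symm
    else eqToHom (by rw [seqGraph_hom_neg Z a b h, seqGraph_hom_neg Z' a b h])

/-- The action of `tbar` on morphisms, in all variables at once. -/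
def tbarMap (T : OverSetFunctor V W) {n : ℕ} {Z Z' : Fin n → V} (g : ∀ k, Z k ⟶ Z' k) :
    tbar T Z ⟶ tbar T Z' := by
  exact T.map (seqGHom g) 0 (Fin.last n)

/-- The morphism of graphs from a sequence graph of consecutive homs into `X`,
determined by a path `x₀, …, xₙ` in `X`. -/
def pathGHom (X : VGraph V) {n : ℕ} (x : Fin (n + 1) → X.objs) :
    GHom (seqGraph (fun k : Fin n => X.hom (x k.castSucc) (x k.succ))) X where
  obj := fun i => x i
  map a b :=
    if h : (b : ℕ) = (a : ℕ) + 1 then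
      eqToHom (seqGraph_hom_pos _ a b h) ≫
        eqToHom (by
          rw [show (Fin.succ ⟨(a : ℕ), by have := b.isLt; omega⟩ : Fin (n + 1)) = b from
            Fin.ext (by simp; omega)]
          rfl)
    else eqToHom (seqGraph_hom_neg _ a b h) ≫ initial.to _

end Seq

section PathLike
variable [HasInitial V] [HasCoproducts.{0} W]

/-- The type of paths from `a` to `b` in a `V`-graph `X`. -/
structure PathIdx (X : VGraph V) (a b : X.objs) : Type where
  n : ℕ
  pts : Fin (n + 1) → X.objs
  h0 : pts 0 = a
  h1 : pts (Fin.last n) = b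

/-- The canonical comparison map `∐ T̄ᵢ X(xᵢ₋₁,xᵢ) ⟶ TX(a,b)`. -/
def canonicalPathMap (T : OverSetFunctor V W) (X : VGraph V) (a b : X.objs) :
    (∐ fun p : PathIdx X a b =>
      tbar T (fun k : Fin p.n => X.hom (p.pts k.castSucc) (p.pts k.succ))) ⟶ T.hom X a b :=
  Sigma.desc fun p =>
    T.map (pathGHom X p.pts) 0 (Fin.last p.n) ≫
      eqToHom (show T.hom X (p.pts 0) (p.pts (Fin.last p.n)) = T.hom X a b by rw [p.h0, p.h1])

/-- A functor over `Set` is path-like when all canonical maps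
`∐ T̄ᵢ X(xᵢ₋₁,xᵢ) ⟶ TX(a,b)` are isomorphisms. -/
def OverSetFunctor.PathLike (T : OverSetFunctor V W) : Prop :=
  ∀ (X : VGraph V) (a b : X.objs), IsIso (canonicalPathMap T X a b)

end PathLike

section Distrib
variable [HasInitial V] [HasCoproducts.{0} V] [HasCoproducts.{0} W]

/-- The family of morphisms updating one component. -/
def updateHom {α : Type u₃} [DecidableEq α] (Z : α → V) (i : α) {v v' : V} (g : v ⟶ v') :
    ∀ j : α, Function.update Z i v j ⟶ Function.update Z i v' j := fun j =>
  if h : j = i then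
    eqToHom (by rw [h]; simp) ≫ g ≫ eqToHom (by rw [h]; simp)
  else eqToHom (by rw [Function.update_of_ne h, Function.update_of_ne h])

/-- A functor over `Set` is distributive when each `T̄ₙ` preserves coproducts in each
variable, as witnessed by the canonical comparison maps being isomorphisms. -/
def OverSetFunctor.Distrib (T : OverSetFunctor V W) : Prop :=
  ∀ (n : ℕ) (Z : Fin n → V) (i : Fin n) (ι : Type) (f : ι → V),
    IsIso (Sigma.desc fun k : ι =>
      (tbarMap T (updateHom Z i (Sigma.ι f k)) :
        tbar T (Function.update Z i (f k)) ⟶ tbar T (Function.update Z i (∐ f))))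

end Distrib


section Stmt6
variable [HasInitial V] [HasCoproducts.{0} V] [HasCoproducts.{0} W]

/-- The functor `GR : GV ⥤ GW` over `Set` induced by `R : V ⥤ W`, applying `R` to
each hom. -/
def graphMapFunctor (R : V ⥤ W) : OverSetFunctor V W where
  hom X a b := R.obj (X.hom a b)
  map F a b := R.map (F.map a b)
  map_id X a b := by simp [GHom.id]
  map_comp F G a b := by simp [GHom.comp]

end Stmt6

/-!
For `T = GR` the value `T̄ₙ(Z₁,…,Zₙ) = R(Z(0,n))` is `R Z₁` when `n = 1` and the image `R ⊥` of
the initial object otherwise, which is initial because `R` preserves the empty coproduct. So for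
`n = 1` distributivity is the preservation of coproducts by `R`, and for `n ≠ 1` it compares
initial objects. In the coproduct over paths from `a` to `b`, every summand except the one indexed
by the single edge `a, b` is initial, and that summand is mapped isomorphically onto `R X(a,b)`.
-/

section CoproductOfInitial
variable {C : Type*} [Category C] {β : Type*} {f : β → C} [HasCoproduct f]

def isInitialSigmaOfIsInitial (hf : ∀ b, IsInitial (f b)) : IsInitial (∐ f) :=
  IsInitial.ofUniqueHom (fun Y => Sigma.desc fun b => (hf b).to Y)
    fun _ _ => Sigma.hom_ext _ _ fun b => (hf b).hom_ext _ _

theorem isIso_sigmaDesc_of_isInitial_of_ne {X : C} (g : ∀ b, f b ⟶ X) (b₀ : β) (hg : IsIso (g b₀))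
    (hf : ∀ b, b ≠ b₀ → IsInitial (f b)) : IsIso (Sigma.desc g) := by
  refine ⟨⟨inv (g b₀) ≫ Sigma.ι f b₀, ?_, by simp⟩⟩
  ext b
  by_cases hb : b = b₀
  · subst hb
    simp
  · exact (hf b hb).hom_ext _ _

end CoproductOfInitial

theorem seqGraph_hom_zero_last_of_ne_one [HasInitial V] {n : ℕ} (hn : n ≠ 1) (Z : Fin n → V) :
    (seqGraph Z).hom 0 (Fin.last n) = ⊥_ V :=
  seqGraph_hom_neg Z _ _ (by simpa using hn)

-- For `n = 1` the casts `eqToHom` in `updateHom` and `seqGHom` are between definitionally equal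
-- objects, so they are identities.
theorem updateHom_fin_one (Z : Fin 1 → V) {v v' : V} (g : v ⟶ v') : updateHom Z 0 g 0 = g :=
  (Category.id_comp _).trans (Category.comp_id _)

def PathIdx.edge (X : VGraph V) (a b : X.objs) : PathIdx X a b :=
  ⟨1, ![a, b], rfl, rfl⟩

theorem PathIdx.eq_edge_of_n_eq_one {X : VGraph V} {a b : X.objs} (p : PathIdx X a b)
    (hp : p.n = 1) : p = PathIdx.edge X a b := by
  obtain ⟨n, x, hx0, hx1⟩ := p
  subst hp
  obtain rfl : x = ![a, b] := by
    funext j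
    fin_cases j
    exacts [hx0, hx1]
  rfl

instance isIso_pathGHom_map_zero_last_one [HasInitial V] (X : VGraph V) (x : Fin 2 → X.objs) :
    IsIso ((pathGHom X x).map 0 (Fin.last 1)) := by
  simp only [pathGHom, Fin.val_last, Fin.val_zero, zero_add, ↓reduceDIte]
  infer_instance

section GraphMapFunctor
variable (R : V ⥤ W)

theorem tbarMap_graphMapFunctor_fin_one [HasInitial V] {Z Z' : Fin 1 → V}
    (g : ∀ k, Z k ⟶ Z' k) : tbarMap (graphMapFunctor R) g = R.map (g 0) :=
  congrArg R.map ((Category.id_comp _).trans (Category.comp_id _))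

def isInitialTbarGraphMapFunctor [HasInitial V] [PreservesColimitsOfShape (Discrete PEmpty.{1}) R]
    {n : ℕ} (hn : n ≠ 1) (Z : Fin n → V) : IsInitial (tbar (graphMapFunctor R) Z) :=
  (initialIsInitial.isInitialObj R _).ofIso
    (eqToIso (congrArg R.obj (seqGraph_hom_zero_last_of_ne_one hn Z))).symm

theorem isIso_sigmaDesc_tbarMap_graphMapFunctor_fin_one [HasCoproducts.{0} V]
    [HasCoproducts.{0} W] {ι : Type} [PreservesColimitsOfShape (Discrete ι) R] (Z : Fin 1 → V)
    (i : Fin 1) (f : ι → V) :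
    IsIso (Sigma.desc fun k : ι =>
      (tbarMap (graphMapFunctor R) (updateHom Z i (Sigma.ι f k)) :
        tbar (graphMapFunctor R) (Function.update Z i (f k)) ⟶
          tbar (graphMapFunctor R) (Function.update Z i (∐ f)))) := by
  obtain rfl := Subsingleton.elim i 0
  have hcomparison : (Sigma.desc fun k : ι =>
      (tbarMap (graphMapFunctor R) (updateHom Z 0 (Sigma.ι f k)) :
        tbar (graphMapFunctor R) (Function.update Z 0 (f k)) ⟶
          tbar (graphMapFunctor R) (Function.update Z 0 (∐ f)))) = sigmaComparison R f := by
    ext k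
    simp only [colimit.ι_desc, tbarMap_graphMapFunctor_fin_one, updateHom_fin_one]
    exact (ι_comp_sigmaComparison R f k).symm
  rw [hcomparison]
  exact (inferInstance : IsIso (sigmaComparison R f))

theorem graphMapFunctor_distrib [HasCoproducts.{0} V] [HasCoproducts.{0} W]
    (hR : ∀ ι : Type, Nonempty (PreservesColimitsOfShape (Discrete ι) R)) :
    (graphMapFunctor R).Distrib := by
  intro n Z i ι f
  have := (hR ι).some
  rcases eq_or_ne n 1 with rfl | hn
  · exact isIso_sigmaDesc_tbarMap_graphMapFunctor_fin_one R Z i f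
  · have := (hR PEmpty).some
    exact isIso_of_isInitial
      (isInitialSigmaOfIsInitial fun _ => isInitialTbarGraphMapFunctor R hn _)
      (isInitialTbarGraphMapFunctor R hn _) _

theorem graphMapFunctor_pathLike [HasInitial V] [HasCoproducts.{0} W]
    [PreservesColimitsOfShape (Discrete PEmpty.{1}) R] : (graphMapFunctor R).PathLike := by
  intro X a b
  refine isIso_sigmaDesc_of_isInitial_of_ne _ (PathIdx.edge X a b) ?_ fun p hp =>
    isInitialTbarGraphMapFunctor R (fun h => hp (p.eq_edge_of_n_eq_one h)) _
  -- along the edge path the endpoints are `a` and `b` on the nose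
  exact IsIso.comp_isIso' (Functor.map_isIso R ((pathGHom X ![a, b]).map 0 (Fin.last 1)))
    (Iso.isIso_hom (eqToIso rfl))

end GraphMapFunctor

section
variable [HasInitial V] [HasCoproducts.{0} V] [HasCoproducts.{0} W]

/-- For a coproduct-preserving functor `R : V ⥤ W`, the induced functor `GR` on
enriched graphs is both distributive and path-like. -/
theorem graphMapFunctor_distrib_and_pathLike (R : V ⥤ W)
    (hR : ∀ ι : Type, Nonempty (PreservesColimitsOfShape (Discrete ι) R)) :
    (graphMapFunctor R).Distrib ∧ (graphMapFunctor R).PathLike :=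
  have := (hR PEmpty).some
  ⟨graphMapFunctor_distrib R hR, graphMapFunctor_pathLike R⟩

end
end
end

section
/- Let V be a category with coproducts, W a cocomplete category, J a small connected category, and F : J → [GV, GW] a functor such that each F(j) is a functor over Set and each F(α) is a natural transformation over Set. Then: (1) a colimit K of F may be chosen so that K is over Set; given such a choice, (2) if each F(j) is path-like then K is path-like, and (3) if each F(j) is distributive then K is distributive. -/
open CategoryTheory Limits

noncomputable section

universe v₁ v₂ v₃ u₁ u₂ u₃

variable {V : Type u₁} [Category.{v₁} V] {W : Type u₂} [Category.{v₂} W]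
  {Y : Type u₃} [Category.{v₃} Y]

section Stmt8

variable {J : Type} [SmallCategory J]

/-- A diagram of shape `J` in the (meta)category of functors `GV ⥤ GW` over `Set`, all
of whose arrows are natural transformations over `Set`. -/
structure OSDiagram (J : Type) [SmallCategory J] (V : Type u₁) [Category.{v₁} V]
    (W : Type u₂) [Category.{v₂} W] where
  D : J → OverSetFunctor V W
  α : ∀ {j j' : J}, (j ⟶ j') → ∀ (X : VGraph V) (a b : X.objs),
    (D j).hom X a b ⟶ (D j').hom X a b
  α_natural : ∀ {j j' : J} (f : j ⟶ j') {X Z : VGraph V} (F : GHom X Z) (a b : X.objs),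
    (D j).map F a b ≫ α f Z (F.obj a) (F.obj b) = α f X a b ≫ (D j').map F a b
  α_id : ∀ (j : J) (X : VGraph V) (a b : X.objs), α (𝟙 j) X a b = 𝟙 _
  α_comp : ∀ {j j' j'' : J} (f : j ⟶ j') (g : j' ⟶ j'') (X : VGraph V) (a b : X.objs),
    α (f ≫ g) X a b = α f X a b ≫ α g X a b

/-- A cocone over such a diagram whose vertex is again a functor over `Set`. -/
structure OSCocone (𝒟 : OSDiagram J V W) where
  K : OverSetFunctor V W
  ι : ∀ (j : J) (X : VGraph V) (a b : X.objs), (𝒟.D j).hom X a b ⟶ K.hom X a b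
  ι_natural : ∀ (j : J) {X Z : VGraph V} (F : GHom X Z) (a b : X.objs),
    (𝒟.D j).map F a b ≫ ι j Z (F.obj a) (F.obj b) = ι j X a b ≫ K.map F a b
  ι_cocone : ∀ {j j' : J} (f : j ⟶ j') (X : VGraph V) (a b : X.objs),
    𝒟.α f X a b ≫ ι j' X a b = ι j X a b

/-- The hom-wise diagram in `W` underlying a diagram of functors over `Set`. -/
def OSDiagram.homFunctor (𝒟 : OSDiagram J V W) (X : VGraph V) (a b : X.objs) : J ⥤ W where
  obj j := (𝒟.D j).hom X a b
  map f := 𝒟.α f X a b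
  map_id j := 𝒟.α_id j X a b
  map_comp f g := 𝒟.α_comp f g X a b

/-- A cocone of functors over `Set` is colimiting when it is a colimit hom-wise. -/
def OSCocone.IsColimiting {𝒟 : OSDiagram J V W} (c : OSCocone 𝒟) : Prop :=
  ∀ (X : VGraph V) (a b : X.objs),
    Nonempty (IsColimit (Cocone.mk (c.K.hom X a b)
      { app := fun j => c.ι j X a b
        naturality := by
          intro j j' f
          dsimp [OSDiagram.homFunctor]
          rw [Category.comp_id]
          exact c.ι_cocone f X a b } : Cocone (𝒟.homFunctor X a b)))

/-!
The colimit of functors over `Set` is computed hom by hom. Path-likeness and distributivity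
both assert that a canonical map `∐ₚ T (Sₚ) (uₚ, vₚ) ⟶ T X (a, b)`, assembled from the action
of `T` on graph morphisms `Sₚ ⟶ X`, is invertible. These maps are natural in `T`, and
coproducts commute with colimits, so the map for the colimit `K` is the colimit of the maps
for the `D j`; a colimit of isomorphisms is an isomorphism.
-/

section SigmaCocone

variable {I C P : Type*} [Category* I] [Category* C] [HasCoproductsOfShape P C]

abbrev sigmaDiagram (G : P → I ⥤ C) : I ⥤ C where
  obj i := ∐ fun p => (G p).obj i
  map f := Limits.Sigma.map fun p => (G p).map f

@[simps]
def sigmaDiagramι (G : P → I ⥤ C) (p : P) : G p ⟶ sigmaDiagram G where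
  app i := Sigma.ι (fun q => (G q).obj i) p
  naturality i i' f := by simp

abbrev sigmaCocone {G : P → I ⥤ C} (c : ∀ p, Cocone (G p)) : Cocone (sigmaDiagram G) where
  pt := ∐ fun p => (c p).pt
  ι :=
    { app i := Limits.Sigma.map fun p => (c p).ι.app i
      naturality i i' f := by ext p; simp }

def isColimitSigmaCocone {G : P → I ⥤ C} {c : ∀ p, Cocone (G p)}
    (hc : ∀ p, IsColimit (c p)) :
    IsColimit (sigmaCocone c) where
  desc s := Sigma.desc fun p => (hc p).desc ((Cocone.precompose (sigmaDiagramι G p)).obj s)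
  fac s i := by ext p; simp
  uniq s m hm := Sigma.hom_ext _ _ fun p => (hc p).hom_ext fun i => by simp [← hm i]

end SigmaCocone

theorem eqToHom_naturality₂ {O : Type*} {A B : O → O → W} (φ : ∀ x y, A x y ⟶ B x y)
    {a a' b b' : O} (ha : a' = a) (hb : b' = b) :
    φ a' b' ≫ eqToHom (by rw [ha, hb]) = eqToHom (by rw [ha, hb]) ≫ φ a b := by
  subst ha hb
  simp

section SigmaComparison

variable [HasCoproducts.{0} W] {X : VGraph V} {a b : X.objs} {P : Type} {S : P → VGraph V}
  (F : ∀ p, GHom (S p) X) (u v : ∀ p, (S p).objs)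
  (ha : ∀ p, (F p).obj (u p) = a) (hb : ∀ p, (F p).obj (v p) = b)

def OverSetFunctor.sigmaComparison (T : OverSetFunctor V W) :
    (∐ fun p => T.hom (S p) (u p) (v p)) ⟶ T.hom X a b :=
  Sigma.desc fun p => T.map (F p) (u p) (v p) ≫ eqToHom (by rw [ha p, hb p])

theorem sigmaMap_comp_sigmaComparison {T T' : OverSetFunctor V W}
    (φ : ∀ (X : VGraph V) (a b : X.objs), T.hom X a b ⟶ T'.hom X a b)
    (hφ : ∀ {X Z : VGraph V} (F : GHom X Z) (a b : X.objs),
      T.map F a b ≫ φ Z (F.obj a) (F.obj b) = φ X a b ≫ T'.map F a b) :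
    Limits.Sigma.map (fun p => φ (S p) (u p) (v p)) ≫ T'.sigmaComparison F u v ha hb =
      T.sigmaComparison F u v ha hb ≫ φ X a b := by
  ext p
  simp only [OverSetFunctor.sigmaComparison, Sigma.ι_map_assoc, Sigma.ι_desc,
    Sigma.ι_desc_assoc, Category.assoc]
  rw [← eqToHom_naturality₂ (φ X) (ha p) (hb p), reassoc_of% hφ (F p) (u p) (v p)]

theorem OSCocone.isIso_sigmaComparison {𝒟 : OSDiagram J V W} (c : OSCocone 𝒟)
    (hc : c.IsColimiting) (hiso : ∀ j, IsIso ((𝒟.D j).sigmaComparison F u v ha hb)) :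
    IsIso (c.K.sigmaComparison F u v ha hb) := by
  let θ : sigmaDiagram (fun p => 𝒟.homFunctor (S p) (u p) (v p)) ≅ 𝒟.homFunctor X a b :=
    NatIso.ofComponents (fun j => @asIso _ _ _ _ _ (hiso j))
      fun f => sigmaMap_comp_sigmaComparison F u v ha hb (𝒟.α f) (𝒟.α_natural f)
  have hS := isColimitSigmaCocone fun p => (hc (S p) (u p) (v p)).some
  have hθ : c.K.sigmaComparison F u v ha hb =
      (hS.coconePointsIsoOfNatIso (hc X a b).some θ).hom :=
    hS.hom_ext fun j => by
      rw [IsColimit.comp_coconePointsIsoOfNatIso_hom]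
      exact sigmaMap_comp_sigmaComparison F u v ha hb (c.ι j) (c.ι_natural j)
  rw [hθ]
  infer_instance

theorem OverSetFunctor.pathLike_iff_isIso_sigmaComparison [HasInitial V]
    (T : OverSetFunctor V W) :
    T.PathLike ↔ ∀ (X : VGraph V) (a b : X.objs),
      IsIso (T.sigmaComparison (fun p : PathIdx X a b => pathGHom X p.pts) (fun _ => 0)
        (fun p => Fin.last p.n) (fun p => p.h0) (fun p => p.h1)) :=
  Iff.rfl

theorem OverSetFunctor.sigmaDesc_tbarMap_eq_sigmaComparison [HasInitial V]
    (T : OverSetFunctor V W) {n : ℕ} {ι : Type} {Z : ι → Fin n → V} {Z' : Fin n → V}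
    (g : ∀ k i, Z k i ⟶ Z' i) :
    Sigma.desc (fun k => tbarMap T (g k)) =
      T.sigmaComparison (fun k => seqGHom (g k)) (fun _ => 0) (fun _ => Fin.last n)
        (fun _ => rfl) (fun _ => rfl) := by
  congr 1
  funext k
  exact (Category.comp_id _).symm

theorem OverSetFunctor.distrib_iff_isIso_sigmaComparison [HasCoproducts.{0} V]
    (T : OverSetFunctor V W) :
    T.Distrib ↔ ∀ (n : ℕ) (Z : Fin n → V) (i : Fin n) (ι : Type) (f : ι → V),
      IsIso (T.sigmaComparison (fun k => seqGHom (updateHom Z i (Sigma.ι f k))) (fun _ => 0)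
        (fun _ => Fin.last n) (fun _ => rfl) (fun _ => rfl)) := by
  simp only [OverSetFunctor.Distrib, sigmaDesc_tbarMap_eq_sigmaComparison]
  rfl

end SigmaComparison

section Colimit

variable [HasColimitsOfShape J W] (𝒟 : OSDiagram J V W)

def OSDiagram.natTransOf {X Z : VGraph V} (F : GHom X Z) (a b : X.objs) :
    𝒟.homFunctor X a b ⟶ 𝒟.homFunctor Z (F.obj a) (F.obj b) where
  app j := (𝒟.D j).map F a b
  naturality _ _ f := (𝒟.α_natural f F a b).symm

def OSDiagram.colimitOSCocone : OSCocone 𝒟 where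
  K :=
    { hom X a b := colimit (𝒟.homFunctor X a b)
      map F a b := colimMap (𝒟.natTransOf F a b)
      map_id X a b := by
        have : 𝒟.natTransOf (GHom.id X) a b = 𝟙 _ := by
          ext j
          exact (𝒟.D j).map_id X a b
        rw [colimMap_eq, this]
        exact colim.map_id _
      map_comp F G a b := by
        rw [colimMap_eq, colimMap_eq, colimMap_eq, ← Functor.map_comp]
        congr 1
        ext j
        exact (𝒟.D j).map_comp F G a b }
  ι j X a b := colimit.ι (𝒟.homFunctor X a b) j
  ι_natural j X Z F a b := (ι_colimMap (𝒟.natTransOf F a b) j).symm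
  ι_cocone f X a b := colimit.w (𝒟.homFunctor X a b) f

theorem OSDiagram.colimitOSCocone_isColimiting : 𝒟.colimitOSCocone.IsColimiting :=
  fun X a b => ⟨colimit.isColimit (𝒟.homFunctor X a b)⟩

end Colimit

theorem colimit_overSet_pathLike_distributive_general
    [HasInitial V] [HasCoproducts.{0} V] [HasColimits W]
    (𝒟 : OSDiagram J V W) :
    (∃ c : OSCocone 𝒟, c.IsColimiting) ∧
    ∀ c : OSCocone 𝒟, c.IsColimiting →
      ((∀ j, (𝒟.D j).PathLike) → c.K.PathLike) ∧
      ((∀ j, (𝒟.D j).Distrib) → c.K.Distrib) := by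
  refine ⟨⟨𝒟.colimitOSCocone, 𝒟.colimitOSCocone_isColimiting⟩, fun c hc => ⟨?_, ?_⟩⟩
  · simp only [OverSetFunctor.pathLike_iff_isIso_sigmaComparison]
    exact fun h X a b => c.isIso_sigmaComparison _ _ _ _ _ hc fun j => h j X a b
  · simp only [OverSetFunctor.distrib_iff_isIso_sigmaComparison]
    exact fun h n Z i ι f => c.isIso_sigmaComparison _ _ _ _ _ hc fun j => h j n Z i ι f

/-- Connected colimits of functors over `Set` may be chosen over `Set`; such a colimit
is path-like (resp. distributive) as soon as all the functors of the diagram are. -/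
theorem colimit_overSet_pathLike_distributive
    [IsConnected J] [HasInitial V] [HasCoproducts.{0} V] [HasColimits W]
    (𝒟 : OSDiagram J V W) :
    (∃ c : OSCocone 𝒟, c.IsColimiting) ∧
    ∀ c : OSCocone 𝒟, c.IsColimiting →
      ((∀ j, (𝒟.D j).PathLike) → c.K.PathLike) ∧
      ((∀ j, (𝒟.D j).Distrib) → c.K.Distrib) :=
  colimit_overSet_pathLike_distributive_general 𝒟

end Stmt8
end
end

section
/- For any category E, the structure–semantics functor Mnd(E)^op → CAT/E, sending a monad T on E to the forgetful functor U^T : E^T → E, is fully faithful. Consequently, if S and T are monads on E and Φ : E^T ≅ E^S is an isomorphism of categories commuting with the forgetful functors to E, then Φ is induced by a unique monad isomorphism S ≅ T. -/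
open CategoryTheory Limits

universe v u

/-!
A functor `G : E^T ⥤ E^S` over `E` equips the carrier of each `T`-algebra `A` with an `S`-action
`σ_A`, natural in maps of `T`-algebras. The actions on free algebras give the components
`φ_X = σ_{TX} ∘ S η_X` of a monad morphism `S ⟶ T`, and naturality of `σ` along the algebra map
`a : TA ⟶ A` yields `a ∘ φ_A = σ_A`, i.e. `G` is restriction along `φ`. Conversely a monad morphism
is recovered from its restriction functor by evaluating at free algebras,
`φ_X = μ_X ∘ φ_{TX} ∘ S η_X`, which gives uniqueness. Since restriction is functorial, an
isomorphism of categories over `E` then comes from a unique isomorphism of monads.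
-/

namespace CategoryTheory

theorem Functor.ext_of_comp_faithful {C D E : Type*} [Category C] [Category D] [Category E]
    {F G : C ⥤ D} (H : D ⥤ E) [H.Faithful] (hobj : ∀ X, F.obj X = G.obj X)
    (h : F ⋙ H = G ⋙ H) : F = G :=
  Functor.ext hobj fun _ _ f => H.map_injective <| by
    simpa [eqToHom_map] using Functor.congr_hom h f

namespace Monad

variable {E : Type u} [Category.{v} E] {S T : Monad E}

theorem Algebra.ext {A B : S.Algebra} (h : A.A = B.A) (w : A.a ≍ B.a) : A = B := by
  obtain ⟨X, a, _, _⟩ := A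
  obtain ⟨Y, b, _, _⟩ := B
  dsimp only at h w
  subst h w
  rfl

@[simps]
def Algebra.copy (B : S.Algebra) (X : E) (hX : X = B.A) : S.Algebra where
  A := X
  a := S.map (eqToHom hX) ≫ B.a ≫ eqToHom hX.symm
  unit := by subst hX; simpa using B.unit
  assoc := by subst hX; simpa using B.assoc

theorem Algebra.copy_eq (B : S.Algebra) (X : E) (hX : X = B.A) : B.copy X hX = B :=
  Algebra.ext hX (by subst hX; simp; rfl)

def Algebra.Hom.copy {B B' : S.Algebra} (g : B ⟶ B') {X X' : E} (hX : X = B.A) (hX' : X' = B'.A)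
    (k : X ⟶ X') (hk : k = eqToHom hX ≫ g.f ≫ eqToHom hX'.symm) :
    B.copy X hX ⟶ B'.copy X' hX' where
  f := k
  h := by
    subst hX hX' hk
    simp only [Algebra.copy_a, eqToHom_refl, Functor.map_id, Category.id_comp, Category.comp_id]
    exact g.h

/-- `G ⋙ S.forget = P` identifies the carriers of `G` with `P` only propositionally; this copy of
`G` has `P.obj d` as carriers and `P.map f` as underlying maps on the nose. -/
def copyCarriers {D : Type*} [Category D] (G : D ⥤ S.Algebra) (P : D ⥤ E)
    (h : G ⋙ S.forget = P) : D ⥤ S.Algebra where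
  obj d := (G.obj d).copy (P.obj d) (Functor.congr_obj h d).symm
  map f := (G.map f).copy _ _ (P.map f) (Functor.congr_hom h.symm f)

theorem copyCarriers_eq {D : Type*} [Category D] (G : D ⥤ S.Algebra) (P : D ⥤ E)
    (h : G ⋙ S.forget = P) : copyCarriers G P h = G :=
  Functor.ext_of_comp_faithful S.forget (fun d => (G.obj d).copy_eq _ _)
    ((rfl : copyCarriers G P h ⋙ S.forget = P).trans h.symm)

theorem algebraFunctorOfMonadHom_id :
    algebraFunctorOfMonadHom (𝟙 S) = 𝟭 S.Algebra :=
  Functor.ext_of_comp_faithful S.forget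
    (fun A => Algebra.ext rfl (heq_of_eq (Category.id_comp A.a))) rfl

theorem algebraFunctorOfMonadHom_comp {U : Monad E} (f : S ⟶ T) (g : T ⟶ U) :
    algebraFunctorOfMonadHom (f ≫ g) =
      algebraFunctorOfMonadHom g ⋙ algebraFunctorOfMonadHom f :=
  Functor.ext_of_comp_faithful S.forget
    (fun _ => Algebra.ext rfl (heq_of_eq (Category.assoc _ _ _))) rfl

theorem _root_.CategoryTheory.MonadHom.app_eq_map_η_comp_app_comp_μ (φ : S ⟶ T) (X : E) :
    φ.app X = S.map (T.η.app X) ≫ φ.app (T.obj X) ≫ T.μ.app X := by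
  rw [φ.naturality_assoc]
  simp

theorem algebraFunctorOfMonadHom_injective :
    Function.Injective (algebraFunctorOfMonadHom : (S ⟶ T) → T.Algebra ⥤ S.Algebra) := by
  intro φ ψ h
  ext X
  have hfree := Functor.congr_obj h (T.free.obj X)
  dsimp only [algebraFunctorOfMonadHom, free_obj_A, free_obj_a] at hfree
  simp only [Algebra.mk.injEq, heq_eq_eq, true_and] at hfree
  rw [φ.app_eq_map_η_comp_app_comp_μ, ψ.app_eq_map_η_comp_app_comp_μ]
  exact congrArg _ hfree

section OfAlgebraFunctor

variable (G : T.Algebra ⥤ S.Algebra) (hG : G ⋙ S.forget = T.forget)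

def inducedAction (A : T.Algebra) : S.obj A.A ⟶ A.A :=
  ((copyCarriers G T.forget hG).obj A).a

theorem inducedAction_unit (A : T.Algebra) : S.η.app A.A ≫ inducedAction G hG A = 𝟙 A.A :=
  ((copyCarriers G T.forget hG).obj A).unit

theorem inducedAction_assoc (A : T.Algebra) :
    S.μ.app A.A ≫ inducedAction G hG A = S.map (inducedAction G hG A) ≫ inducedAction G hG A :=
  ((copyCarriers G T.forget hG).obj A).assoc

theorem inducedAction_naturality {A B : T.Algebra} (f : A ⟶ B) :
    S.map f.f ≫ inducedAction G hG B = inducedAction G hG A ≫ f.f :=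
  ((copyCarriers G T.forget hG).map f).h

abbrev freeAction (X : E) : S.obj (T.obj X) ⟶ T.obj X :=
  inducedAction G hG (T.free.obj X)

def monadHomOfAlgebraFunctor : S ⟶ T where
  app X := S.map (T.η.app X) ≫ freeAction G hG X
  naturality X Y g := by
    have hτ : S.map (T.map g) ≫ freeAction G hG Y = freeAction G hG X ≫ T.map g :=
      inducedAction_naturality G hG (T.free.map g)
    have hη : g ≫ T.η.app Y = T.η.app X ≫ T.map g := T.η.naturality g
    simp only [Category.assoc]
    rw [← S.map_comp_assoc, hη, S.map_comp_assoc, hτ]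
  app_η X := by
    have hunit : S.η.app (T.obj X) ≫ freeAction G hG X = 𝟙 _ :=
      inducedAction_unit G hG (T.free.obj X)
    rw [← S.η.naturality_assoc, hunit, Category.comp_id, Functor.id_map]
  app_μ X := by
    have hμ : S.map (T.μ.app X) ≫ freeAction G hG X = freeAction G hG (T.obj X) ≫ T.μ.app X :=
      inducedAction_naturality G hG (⟨T.μ.app X, T.assoc X⟩ : T.free.obj (T.obj X) ⟶ T.free.obj X)
    have hassoc : S.μ.app (T.obj X) ≫ freeAction G hG X =
        S.map (freeAction G hG X) ≫ freeAction G hG X :=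
      inducedAction_assoc G hG (T.free.obj X)
    rw [Category.assoc, Category.assoc, ← hμ, ← S.map_comp_assoc (T.η.app _), T.left_unit,
      S.map_id, Category.id_comp, S.map_comp_assoc, ← hassoc, ← S.μ.naturality_assoc]
    rfl

theorem monadHomOfAlgebraFunctor_app_comp_a (A : T.Algebra) :
    (monadHomOfAlgebraFunctor G hG).app A.A ≫ A.a = inducedAction G hG A := by
  have ha : S.map A.a ≫ inducedAction G hG A = freeAction G hG A.A ≫ A.a :=
    inducedAction_naturality G hG (⟨A.a, A.assoc.symm⟩ : T.free.obj A.A ⟶ A)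
  change (S.map (T.η.app A.A) ≫ freeAction G hG A.A) ≫ A.a = _
  rw [Category.assoc, ← ha, ← S.map_comp_assoc, A.unit]
  simp

theorem algebraFunctorOfMonadHom_monadHomOfAlgebraFunctor :
    algebraFunctorOfMonadHom (monadHomOfAlgebraFunctor G hG) = G :=
  calc algebraFunctorOfMonadHom (monadHomOfAlgebraFunctor G hG)
      _ = copyCarriers G T.forget hG := Functor.ext_of_comp_faithful S.forget
          (fun A => Algebra.ext rfl (heq_of_eq (monadHomOfAlgebraFunctor_app_comp_a G hG A))) rfl
      _ = G := copyCarriers_eq G T.forget hG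

end OfAlgebraFunctor

theorem existsUnique_algebraFunctorOfMonadHom_eq (G : T.Algebra ⥤ S.Algebra)
    (hG : G ⋙ S.forget = T.forget) : ∃! φ : S ⟶ T, algebraFunctorOfMonadHom φ = G :=
  ⟨monadHomOfAlgebraFunctor G hG, algebraFunctorOfMonadHom_monadHomOfAlgebraFunctor G hG,
    fun _ hφ => algebraFunctorOfMonadHom_injective
      (hφ.trans (algebraFunctorOfMonadHom_monadHomOfAlgebraFunctor G hG).symm)⟩

end Monad

end CategoryTheory

/-- Structure–semantics is fully faithful: for monads `S`, `T` on `E`, every functor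
`E^T ⥤ E^S` commuting with the forgetful functors is induced by a unique monad morphism
`S ⟶ T`; consequently any isomorphism of categories `E^T ≅ E^S` over `E` is induced by a
unique isomorphism of monads `S ≅ T`. -/
theorem structure_semantics_fully_faithful {E : Type u} [Category.{v} E] (S T : Monad E) :
    (∀ G : T.Algebra ⥤ S.Algebra, G ⋙ S.forget = T.forget →
      ∃! φ : S ⟶ T, Monad.algebraFunctorOfMonadHom φ = G) ∧
    (∀ (Φ : T.Algebra ⥤ S.Algebra) (Ψ : S.Algebra ⥤ T.Algebra),
      Φ ⋙ Ψ = 𝟭 T.Algebra → Ψ ⋙ Φ = 𝟭 S.Algebra →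
      Φ ⋙ S.forget = T.forget → Ψ ⋙ T.forget = S.forget →
      ∃! φ : S ≅ T, Monad.algebraFunctorOfMonadHom φ.hom = Φ) := by
  refine ⟨Monad.existsUnique_algebraFunctorOfMonadHom_eq, fun Φ Ψ hΦΨ hΨΦ hΦ hΨ => ?_⟩
  obtain ⟨φ, hφ, -⟩ := Monad.existsUnique_algebraFunctorOfMonadHom_eq Φ hΦ
  obtain ⟨ψ, hψ, -⟩ := Monad.existsUnique_algebraFunctorOfMonadHom_eq Ψ hΨ
  have hφψ : φ ≫ ψ = 𝟙 S := Monad.algebraFunctorOfMonadHom_injective <| by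
    rw [Monad.algebraFunctorOfMonadHom_comp, Monad.algebraFunctorOfMonadHom_id, hφ, hψ, hΨΦ]
  have hψφ : ψ ≫ φ = 𝟙 T := Monad.algebraFunctorOfMonadHom_injective <| by
    rw [Monad.algebraFunctorOfMonadHom_comp, Monad.algebraFunctorOfMonadHom_id, hφ, hψ, hΦΨ]
  exact ⟨⟨φ, ψ, hφψ, hψφ⟩, hφ,
    fun χ hχ => Iso.ext (Monad.algebraFunctorOfMonadHom_injective (hχ.trans hφ.symm))⟩
end

section
/- Let V be a category with filtered colimits and coequalisers, T a monad on V, and f,g : (A,a) → (B,b) a parallel pair in V^T. In the transfinite coequaliser construction producing objects Qₙ and maps vₙ : TQₙ → Q_{n+1}, qₙ : Qₙ → Q_{n+1}, q_{<n} : B → Qₙ: if the sequence stabilises at n (i.e. qₙ and q_{n+1} are isomorphisms), then (Qₙ, qₙ⁻¹ ∘ vₙ) is a T-algebra and q_{<n} : (B,b) → (Qₙ, qₙ⁻¹∘vₙ) is the coequaliser of f and g in V^T. -/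
open CategoryTheory Limits

universe v u

variable {V : Type u} [Category.{v} V]

/-- The composite `q_{<n} : Q₀ ⟶ Qₙ` of the transfinite coequaliser construction. -/
def qlt (Q : ℕ → V) (q : ∀ m : ℕ, Q m ⟶ Q (m + 1)) : ∀ n : ℕ, Q 0 ⟶ Q n
  | 0 => 𝟙 (Q 0)
  | n + 1 => qlt Q q n ≫ q n

/-- The composite `Q m ⟶ Q (m + k)` of the maps `q`. -/
def pathQ (Q : ℕ → V) (q : ∀ m : ℕ, Q m ⟶ Q (m + 1)) : ∀ (m k : ℕ), Q m ⟶ Q (m + k)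
  | _, 0 => 𝟙 _
  | m, k + 1 => pathQ Q q m k ≫ q (m + k)

/-- The inductively constructed family of maps `dₘ : Q m ⟶ W` descending a cocone. -/
noncomputable def seqD (T : Monad V) (Q : ℕ → V)
    (q : ∀ m : ℕ, Q m ⟶ Q (m + 1)) (v : ∀ m : ℕ, (T : V ⥤ V).obj (Q m) ⟶ Q (m + 1))
    {A : V} {b : (T : V ⥤ V).obj (Q 0) ⟶ Q 0} {f g : A ⟶ Q 0}
    {e0 : f ≫ q 0 = g ≫ q 0} (hq0 : IsColimit (Cofork.ofπ (q 0) e0))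
    (hv0 : v 0 = b ≫ q 0)
    (hqsucc : ∀ m : ℕ, q (m + 1) = T.η.app (Q (m + 1)) ≫ v (m + 1))
    (emq : ∀ m : ℕ, (T.μ.app (Q m) ≫ (T : V ⥤ V).map (q m)) ≫ v (m + 1) =
          (T : V ⥤ V).map (v m) ≫ v (m + 1))
    (hvcol : ∀ m, IsColimit (Cofork.ofπ (v (m + 1)) (emq m)))
    {W : V} (cW : (T : V ⥤ V).obj W ⟶ W)
    (hWu : T.η.app W ≫ cW = 𝟙 W)
    (hWa : T.μ.app W ≫ cW = (T : V ⥤ V).map cW ≫ cW)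
    (kf : Q 0 ⟶ W) (hk : (T : V ⥤ V).map kf ≫ cW = b ≫ kf)
    (hfg : f ≫ kf = g ≫ kf) :
    ∀ m : ℕ, { dd : (Q m ⟶ W) × (Q (m + 1) ⟶ W) //
      qlt Q q m ≫ dd.1 = kf ∧ q m ≫ dd.2 = dd.1 ∧
      v m ≫ dd.2 = (T : V ⥤ V).map dd.1 ≫ cW }
  | 0 =>
    ⟨⟨kf, Cofork.IsColimit.desc hq0 kf hfg⟩, by simp [qlt],
      by simpa using Cofork.IsColimit.π_desc' hq0 kf hfg,
      by
        have hp : q 0 ≫ Cofork.IsColimit.desc hq0 kf hfg = kf := by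
          simpa using Cofork.IsColimit.π_desc' hq0 kf hfg
        rw [hv0, Category.assoc, hp, hk]⟩
  | (m + 1) =>
    have prev := seqD T Q q v hq0 hv0 hqsucc emq hvcol cW hWu hWa kf hk hfg m
    have w : (T.μ.app (Q (m + 1 - 1)) ≫ (T : V ⥤ V).map (q (m + 1 - 1))) ≫
        ((T : V ⥤ V).map prev.1.2 ≫ cW) =
        (T : V ⥤ V).map (v (m + 1 - 1)) ≫ ((T : V ⥤ V).map prev.1.2 ≫ cW) := by
      obtain ⟨⟨d0, d1⟩, h1, h2, h3⟩ := prev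
      show (T.μ.app (Q m) ≫ (T : V ⥤ V).map (q m)) ≫ ((T : V ⥤ V).map d1 ≫ cW) =
        (T : V ⥤ V).map (v m) ≫ ((T : V ⥤ V).map d1 ≫ cW)
      calc (T.μ.app (Q m) ≫ (T : V ⥤ V).map (q m)) ≫ ((T : V ⥤ V).map d1 ≫ cW)
          = T.μ.app (Q m) ≫ (T : V ⥤ V).map (q m ≫ d1) ≫ cW := by
            simp [Category.assoc]
        _ = T.μ.app (Q m) ≫ (T : V ⥤ V).map d0 ≫ cW := by rw [h2]
        _ = (T : V ⥤ V).map ((T : V ⥤ V).map d0) ≫ T.μ.app W ≫ cW := by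
            rw [← Category.assoc, ← Category.assoc]
            congr 1
            simpa using (T.μ.naturality d0).symm
        _ = (T : V ⥤ V).map ((T : V ⥤ V).map d0) ≫ (T : V ⥤ V).map cW ≫ cW := by rw [hWa]
        _ = (T : V ⥤ V).map ((T : V ⥤ V).map d0 ≫ cW) ≫ cW := by simp
        _ = (T : V ⥤ V).map (v m ≫ d1) ≫ cW := by rw [h3]
        _ = (T : V ⥤ V).map (v m) ≫ ((T : V ⥤ V).map d1 ≫ cW) := by simp
    ⟨⟨prev.1.2, Cofork.IsColimit.desc (hvcol m) ((T : V ⥤ V).map prev.1.2 ≫ cW) w⟩,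
      by
        show (qlt Q q m ≫ q m) ≫ prev.1.2 = kf
        rw [Category.assoc, prev.2.2.1, prev.2.1],
      by
        have hp : v (m + 1) ≫ Cofork.IsColimit.desc (hvcol m) ((T : V ⥤ V).map prev.1.2 ≫ cW) w =
            (T : V ⥤ V).map prev.1.2 ≫ cW := by
          simpa using Cofork.IsColimit.π_desc' (hvcol m) ((T : V ⥤ V).map prev.1.2 ≫ cW) w
        show q (m + 1) ≫ _ = prev.1.2
        rw [hqsucc m, Category.assoc, hp, ← Category.assoc]
        rw [show T.η.app (Q (m + 1)) ≫ (T : V ⥤ V).map prev.1.2 = prev.1.2 ≫ T.η.app W by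
          simpa using (T.η.naturality prev.1.2).symm]
        rw [Category.assoc, hWu, Category.comp_id],
      by
        simpa using Cofork.IsColimit.π_desc' (hvcol m) ((T : V ⥤ V).map prev.1.2 ≫ cW) w⟩

lemma seqD_exists (T : Monad V) (Q : ℕ → V)
    (q : ∀ m : ℕ, Q m ⟶ Q (m + 1)) (v : ∀ m : ℕ, (T : V ⥤ V).obj (Q m) ⟶ Q (m + 1))
    {A : V} {b : (T : V ⥤ V).obj (Q 0) ⟶ Q 0} {f g : A ⟶ Q 0}
    {e0 : f ≫ q 0 = g ≫ q 0} (hq0 : IsColimit (Cofork.ofπ (q 0) e0))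
    (hv0 : v 0 = b ≫ q 0)
    (hqsucc : ∀ m : ℕ, q (m + 1) = T.η.app (Q (m + 1)) ≫ v (m + 1))
    (emq : ∀ m : ℕ, (T.μ.app (Q m) ≫ (T : V ⥤ V).map (q m)) ≫ v (m + 1) =
          (T : V ⥤ V).map (v m) ≫ v (m + 1))
    (hvcol : ∀ m, IsColimit (Cofork.ofπ (v (m + 1)) (emq m)))
    {W : V} (cW : (T : V ⥤ V).obj W ⟶ W)
    (hWu : T.η.app W ≫ cW = 𝟙 W)
    (hWa : T.μ.app W ≫ cW = (T : V ⥤ V).map cW ≫ cW)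
    (kf : Q 0 ⟶ W) (hk : (T : V ⥤ V).map kf ≫ cW = b ≫ kf)
    (hfg : f ≫ kf = g ≫ kf) :
    ∃ e : ∀ m : ℕ, Q m ⟶ W, e 0 = kf ∧ (∀ m, qlt Q q m ≫ e m = kf) ∧
      (∀ m, q m ≫ e (m + 1) = e m) ∧
      (∀ m, v m ≫ e (m + 1) = (T : V ⥤ V).map (e m) ≫ cW) := by
  have hlink : ∀ m, (seqD T Q q v hq0 hv0 hqsucc emq hvcol cW hWu hWa kf hk hfg (m + 1)).1.1 =
      (seqD T Q q v hq0 hv0 hqsucc emq hvcol cW hWu hWa kf hk hfg m).1.2 := by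
    intro m
    conv_lhs => rw [seqD]
  refine ⟨fun m => (seqD T Q q v hq0 hv0 hqsucc emq hvcol cW hWu hWa kf hk hfg m).1.1,
    ?_, fun m => (seqD T Q q v hq0 hv0 hqsucc emq hvcol cW hWu hWa kf hk hfg m).2.1, ?_, ?_⟩
  · rfl
  · intro m
    dsimp only
    rw [hlink m]
    exact (seqD T Q q v hq0 hv0 hqsucc emq hvcol cW hWu hWa kf hk hfg m).2.2.1
  · intro m
    dsimp only
    rw [hlink m]
    exact (seqD T Q q v hq0 hv0 hqsucc emq hvcol cW hWu hWa kf hk hfg m).2.2.2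
/-- In the transfinite coequaliser construction for a parallel pair `f,g : (A,a) → (B,b)`
of `T`-algebra maps (here `B = Q 0`), if the sequence stabilises at `n` (i.e. `qₙ` and
`q_{n+1}` are isomorphisms), then `(Qₙ, qₙ⁻¹ ∘ vₙ)` is a `T`-algebra and
`q_{<n} : (B,b) → (Qₙ, qₙ⁻¹ ∘ vₙ)` is the coequaliser of `f` and `g` in `V^T`. -/
theorem coequalizer_of_algebras_of_stabilises
    [HasFilteredColimits V] [HasCoequalizers V] (T : Monad V)
    (A : V) (a : (T : V ⥤ V).obj A ⟶ A)
    (ha1 : T.η.app A ≫ a = 𝟙 A) (ha2 : T.μ.app A ≫ a = (T : V ⥤ V).map a ≫ a)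
    (Q : ℕ → V) (b : (T : V ⥤ V).obj (Q 0) ⟶ Q 0)
    (hb1 : T.η.app (Q 0) ≫ b = 𝟙 (Q 0))
    (hb2 : T.μ.app (Q 0) ≫ b = (T : V ⥤ V).map b ≫ b)
    (f g : A ⟶ Q 0)
    (hf : (T : V ⥤ V).map f ≫ b = a ≫ f) (hg : (T : V ⥤ V).map g ≫ b = a ≫ g)
    (q : ∀ m : ℕ, Q m ⟶ Q (m + 1)) (v : ∀ m : ℕ, (T : V ⥤ V).obj (Q m) ⟶ Q (m + 1))
    -- `q₀` is the coequaliser of `f` and `g` in `V`, and `v₀ = b ≫ q₀`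
    (e0 : f ≫ q 0 = g ≫ q 0) (hq0 : IsColimit (Cofork.ofπ (q 0) e0))
    (hv0 : v 0 = b ≫ q 0)
    -- successor steps of the construction
    (hqsucc : ∀ m : ℕ, q (m + 1) = T.η.app (Q (m + 1)) ≫ v (m + 1))
    (hvsucc : ∀ m : ℕ,
      ∃ em : (T.μ.app (Q m) ≫ (T : V ⥤ V).map (q m)) ≫ v (m + 1) =
          (T : V ⥤ V).map (v m) ≫ v (m + 1),
        Nonempty (IsColimit (Cofork.ofπ (v (m + 1)) em)))
    -- the sequence stabilises at `n`
    (n : ℕ) (qinv : Q (n + 1) ⟶ Q n)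
    (hqinv1 : q n ≫ qinv = 𝟙 (Q n)) (hqinv2 : qinv ≫ q n = 𝟙 (Q (n + 1)))
    (hstab : IsIso (q (n + 1))) :
    ∃ (hunit : T.η.app (Q n) ≫ (v n ≫ qinv) = 𝟙 (Q n))
      (hassoc : T.μ.app (Q n) ≫ (v n ≫ qinv) =
        (T : V ⥤ V).map (v n ≫ qinv) ≫ (v n ≫ qinv))
      (halg : (T : V ⥤ V).map (qlt Q q n) ≫ (v n ≫ qinv) = b ≫ qlt Q q n),
      let Aalg : T.Algebra := ⟨A, a, ha1, ha2⟩
      let Balg : T.Algebra := ⟨Q 0, b, hb1, hb2⟩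
      let Qalg : T.Algebra := ⟨Q n, v n ≫ qinv, hunit, hassoc⟩
      let falg : Aalg ⟶ Balg := ⟨f, hf⟩
      let galg : Aalg ⟶ Balg := ⟨g, hg⟩
      let qltalg : Balg ⟶ Qalg := ⟨qlt Q q n, halg⟩
      ∃ ealg : falg ≫ qltalg = galg ≫ qltalg,
        Nonempty (IsColimit (Cofork.ofπ qltalg ealg)) := by
  choose emq hvne using hvsucc
  have hvcol : ∀ m, IsColimit (Cofork.ofπ (v (m + 1)) (emq m)) := fun m => (hvne m).some
  -- `qₘ = η ≫ vₘ` for every `m`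
  have qv : ∀ m, q m = T.η.app (Q m) ≫ v m := by
    intro m
    cases m with
    | zero => rw [hv0, ← Category.assoc, hb1]; simp
    | succ m => exact hqsucc m
  -- `vₘ ≫ q_{m+1} = T qₘ ≫ v_{m+1}`
  have lemB : ∀ m, v m ≫ q (m + 1) = (T : V ⥤ V).map (q m) ≫ v (m + 1) := by
    intro m
    calc v m ≫ q (m + 1) = v m ≫ T.η.app (Q (m + 1)) ≫ v (m + 1) := by rw [hqsucc m]
      _ = (v m ≫ T.η.app (Q (m + 1))) ≫ v (m + 1) := by rw [Category.assoc]
      _ = (T.η.app ((T : V ⥤ V).obj (Q m)) ≫ (T : V ⥤ V).map (v m)) ≫ v (m + 1) := by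
          congr 1
          simpa using T.η.naturality (v m)
      _ = T.η.app ((T : V ⥤ V).obj (Q m)) ≫
            (T.μ.app (Q m) ≫ (T : V ⥤ V).map (q m)) ≫ v (m + 1) := by
          rw [Category.assoc, emq m]
      _ = (T.η.app ((T : V ⥤ V).obj (Q m)) ≫ T.μ.app (Q m)) ≫
            (T : V ⥤ V).map (q m) ≫ v (m + 1) := by simp [Category.assoc]
      _ = (T : V ⥤ V).map (q m) ≫ v (m + 1) := by rw [T.left_unit, Category.id_comp]
  -- every `vₘ` is an epimorphism
  have epiv : ∀ m, Epi (v m) := by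
    intro m
    cases m with
    | zero =>
      rw [hv0]
      haveI hb : Epi b := ⟨fun u w h => by
        have h2 : (T.η.app (Q 0) ≫ b) ≫ u = (T.η.app (Q 0) ≫ b) ≫ w := by
          rw [Category.assoc, Category.assoc, h]
        rw [hb1] at h2
        simpa using h2⟩
      haveI : Epi (q 0) := ⟨fun u w h => Cofork.IsColimit.hom_ext hq0 (by simpa using h)⟩
      exact epi_comp b (q 0)
    | succ m => exact ⟨fun u w h => Cofork.IsColimit.hom_ext (hvcol m) (by simpa using h)⟩
  -- `T q_{<m} ≫ vₘ = b ≫ q_{<m+1}`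
  have lemA : ∀ m, (T : V ⥤ V).map (qlt Q q m) ≫ v m = b ≫ qlt Q q (m + 1) := by
    intro m
    induction m with
    | zero =>
      show (T : V ⥤ V).map (𝟙 (Q 0)) ≫ v 0 = b ≫ 𝟙 (Q 0) ≫ q 0
      simp [hv0]
    | succ m ih =>
      show (T : V ⥤ V).map (qlt Q q m ≫ q m) ≫ v (m + 1) =
        b ≫ qlt Q q (m + 1) ≫ q (m + 1)
      rw [Functor.map_comp, Category.assoc, ← lemB m, ← Category.assoc, ih, Category.assoc]
  have hunit : T.η.app (Q n) ≫ (v n ≫ qinv) = 𝟙 (Q n) := by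
    rw [← Category.assoc, ← qv n, hqinv1]
  have hmu : T.μ.app (Q n) ≫ v n = (T : V ⥤ V).map (v n ≫ qinv) ≫ v n := by
    haveI := hstab
    rw [← cancel_mono (q (n + 1))]
    calc (T.μ.app (Q n) ≫ v n) ≫ q (n + 1)
        = T.μ.app (Q n) ≫ v n ≫ q (n + 1) := by rw [Category.assoc]
      _ = (T.μ.app (Q n) ≫ (T : V ⥤ V).map (q n)) ≫ v (n + 1) := by
          rw [lemB n, ← Category.assoc]
      _ = (T : V ⥤ V).map (v n) ≫ v (n + 1) := emq n
      _ = (T : V ⥤ V).map (v n) ≫ (T : V ⥤ V).map (qinv ≫ q n) ≫ v (n + 1) := by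
          rw [hqinv2]; simp
      _ = ((T : V ⥤ V).map (v n ≫ qinv) ≫ v n) ≫ q (n + 1) := by
          simp only [Functor.map_comp, Category.assoc, lemB n]
  have hassoc : T.μ.app (Q n) ≫ (v n ≫ qinv) =
      (T : V ⥤ V).map (v n ≫ qinv) ≫ (v n ≫ qinv) := by
    rw [← Category.assoc, hmu, Category.assoc]
  have halg : (T : V ⥤ V).map (qlt Q q n) ≫ (v n ≫ qinv) = b ≫ qlt Q q n := by
    rw [← Category.assoc, lemA n]
    show (b ≫ qlt Q q n ≫ q n) ≫ qinv = b ≫ qlt Q q n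
    simp [Category.assoc, hqinv1]
  -- `f` and `g` are coequalised by `q_{<n}`
  have feq : f ≫ qlt Q q n = g ≫ qlt Q q n := by
    have fq : ∀ m, f ≫ qlt Q q (m + 1) = g ≫ qlt Q q (m + 1) := by
      intro m
      induction m with
      | zero =>
        show f ≫ 𝟙 (Q 0) ≫ q 0 = g ≫ 𝟙 (Q 0) ≫ q 0
        simpa using e0
      | succ m ih =>
        show f ≫ qlt Q q (m + 1) ≫ q (m + 1) = g ≫ qlt Q q (m + 1) ≫ q (m + 1)
        rw [← Category.assoc, ← Category.assoc, ih]
    cases n with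
    | zero =>
      show f ≫ 𝟙 (Q 0) = g ≫ 𝟙 (Q 0)
      have h1 : f ≫ q 0 ≫ qinv = g ≫ q 0 ≫ qinv := by
        rw [← Category.assoc, ← Category.assoc, e0]
      rw [hqinv1] at h1
      simpa using h1
    | succ m => exact fq m
  -- swapping `q` past `eqToHom`s
  have qswap : ∀ i j (h : i = j) (h' : i + 1 = j + 1),
      q i ≫ eqToHom (congrArg Q h') = eqToHom (congrArg Q h) ≫ q j := by
    intro i j h h'
    subst h
    simp
  have pathQ0 : ∀ t (h : 0 + t = t),
      pathQ Q q 0 t ≫ eqToHom (congrArg Q h) = qlt Q q t := by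
    intro t
    induction t with
    | zero => intro h; simp [pathQ, qlt]
    | succ t ih =>
      intro h
      have h1 : 0 + t = t := by omega
      calc pathQ Q q 0 (t + 1) ≫ eqToHom (congrArg Q h)
          = pathQ Q q 0 t ≫ q (0 + t) ≫ eqToHom (congrArg Q h) := by
            show (pathQ Q q 0 t ≫ q (0 + t)) ≫ _ = _
            rw [Category.assoc]
        _ = pathQ Q q 0 t ≫ eqToHom (congrArg Q h1) ≫ q t := by
            exact congrArg (fun x => pathQ Q q 0 t ≫ x) (qswap (0 + t) t h1 h)
        _ = (pathQ Q q 0 t ≫ eqToHom (congrArg Q h1)) ≫ q t := by rw [Category.assoc]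
        _ = qlt Q q t ≫ q t := by rw [ih h1]
        _ = qlt Q q (t + 1) := rfl
  have Bstar2 : ∀ k m (h : (m + 1) + k = m + k + 1),
      v m ≫ pathQ Q q (m + 1) k ≫ eqToHom (congrArg Q h) =
        (T : V ⥤ V).map (pathQ Q q m k) ≫ v (m + k) := by
    intro k
    induction k with
    | zero =>
      intro m h
      show v m ≫ 𝟙 (Q (m + 1)) ≫ eqToHom (congrArg Q h) = (T : V ⥤ V).map (𝟙 (Q m)) ≫ v m
      simp
    | succ k ih =>
      intro m h
      have h1 : (m + 1) + k = m + k + 1 := by omega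
      calc v m ≫ pathQ Q q (m + 1) (k + 1) ≫ eqToHom (congrArg Q h)
          = v m ≫ pathQ Q q (m + 1) k ≫ q ((m + 1) + k) ≫ eqToHom (congrArg Q h) := by
            show _ ≫ (pathQ Q q (m + 1) k ≫ q ((m + 1) + k)) ≫ _ = _
            rw [Category.assoc]
        _ = v m ≫ pathQ Q q (m + 1) k ≫ eqToHom (congrArg Q h1) ≫ q (m + k + 1) := by
            exact congrArg (fun x => v m ≫ pathQ Q q (m + 1) k ≫ x)
              (qswap ((m + 1) + k) (m + k + 1) h1 h)
        _ = (v m ≫ pathQ Q q (m + 1) k ≫ eqToHom (congrArg Q h1)) ≫ q (m + k + 1) := by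
            simp [Category.assoc]
        _ = ((T : V ⥤ V).map (pathQ Q q m k) ≫ v (m + k)) ≫ q (m + k + 1) := by
            rw [ih m h1]
        _ = (T : V ⥤ V).map (pathQ Q q m k) ≫ (T : V ⥤ V).map (q (m + k)) ≫ v (m + k + 1) := by
            rw [Category.assoc, lemB (m + k)]
        _ = (T : V ⥤ V).map (pathQ Q q m (k + 1)) ≫ v (m + (k + 1)) := by
            show _ = (T : V ⥤ V).map (pathQ Q q m k ≫ q (m + k)) ≫ v (m + k + 1)
            rw [Functor.map_comp, Category.assoc]
  have hkey : ∀ (W : V) (cW : (T : V ⥤ V).obj W ⟶ W) (u : Q n ⟶ W),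
      (T : V ⥤ V).map u ≫ cW = (v n ≫ qinv) ≫ u → ∀ j (h : j + 1 = n),
      v j ≫ eqToHom (congrArg Q h) ≫ u =
        (T : V ⥤ V).map (q j) ≫ (T : V ⥤ V).map (eqToHom (congrArg Q h)) ≫
          (T : V ⥤ V).map u ≫ cW := by
    intro W cW u hu j h
    subst h
    simp only [eqToHom_refl, CategoryTheory.Functor.map_id, Category.id_comp]
    rw [hu]
    rw [show (T : V ⥤ V).map (q j) ≫ (v (j + 1) ≫ qinv) ≫ u =
      ((T : V ⥤ V).map (q j) ≫ v (j + 1)) ≫ qinv ≫ u by simp [Category.assoc]]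
    rw [← lemB j]
    rw [show (v j ≫ q (j + 1)) ≫ qinv ≫ u = v j ≫ (q (j + 1) ≫ qinv) ≫ u by
      simp [Category.assoc]]
    rw [hqinv1, Category.id_comp]
  refine ⟨hunit, hassoc, halg, ?_⟩
  intro Aalg Balg Qalg falg galg qltalg
  have ealg : falg ≫ qltalg = galg ≫ qltalg := Monad.Algebra.Hom.ext feq
  refine ⟨ealg, ⟨Cofork.IsColimit.ofExistsUnique fun s => ?_⟩⟩
  have hfg : f ≫ (Cofork.π s).f = g ≫ (Cofork.π s).f := congrArg Monad.Algebra.Hom.f s.condition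
  have hk : (T : V ⥤ V).map (Cofork.π s).f ≫ s.pt.a = b ≫ (Cofork.π s).f := (Cofork.π s).h
  obtain ⟨e, he0, he1, he2, he3⟩ := seqD_exists T Q q v hq0 hv0 hqsucc emq hvcol
    s.pt.a s.pt.unit s.pt.assoc (Cofork.π s).f hk hfg
  have hdalg : (T : V ⥤ V).map (e n) ≫ s.pt.a = (v n ≫ qinv) ≫ e n := by
    rw [← he3 n]
    rw [show (v n ≫ qinv) ≫ e n = v n ≫ qinv ≫ e n by rw [Category.assoc]]
    congr 1
    rw [← he2 n, ← Category.assoc, hqinv2, Category.id_comp]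
  refine ⟨⟨e n, hdalg⟩, ?_, ?_⟩
  · exact Monad.Algebra.Hom.ext' _ _ _ _ (he1 n)
  · intro dd hdd
    have hu : (T : V ⥤ V).map dd.f ≫ s.pt.a = (v n ≫ qinv) ≫ dd.f := dd.h
    have hqu : qlt Q q n ≫ dd.f = (Cofork.π s).f := congrArg Monad.Algebra.Hom.f hdd
    have S : ∀ m k (h : m + k = n),
        pathQ Q q m k ≫ eqToHom (congrArg Q h) ≫ dd.f = e m := by
      intro m
      induction m with
      | zero =>
        intro k h
        obtain rfl : k = n := by omega
        rw [← Category.assoc, pathQ0 _ h, hqu]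
        exact he0.symm
      | succ m ih =>
        intro k h
        have h1 : (m + 1) + k = m + k + 1 := by omega
        have h2 : m + k + 1 = n := by omega
        haveI := epiv m
        rw [← cancel_epi (v m)]
        have hsplit : (eqToHom (congrArg Q h) : Q ((m + 1) + k) ⟶ Q n) =
            eqToHom (congrArg Q h1) ≫ eqToHom (congrArg Q h2) := by
          rw [eqToHom_trans]
        calc v m ≫ pathQ Q q (m + 1) k ≫ eqToHom (congrArg Q h) ≫ dd.f
            = (v m ≫ pathQ Q q (m + 1) k ≫ eqToHom (congrArg Q h1)) ≫
                eqToHom (congrArg Q h2) ≫ dd.f := by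
              rw [hsplit]; simp [Category.assoc]
          _ = ((T : V ⥤ V).map (pathQ Q q m k) ≫ v (m + k)) ≫
                eqToHom (congrArg Q h2) ≫ dd.f := by
              rw [Bstar2 k m h1]
          _ = (T : V ⥤ V).map (pathQ Q q m k) ≫ (T : V ⥤ V).map (q (m + k)) ≫
                (T : V ⥤ V).map (eqToHom (congrArg Q h2)) ≫ (T : V ⥤ V).map dd.f ≫ s.pt.a := by
              rw [Category.assoc, hkey s.pt.A s.pt.a dd.f hu (m + k) h2]
          _ = (T : V ⥤ V).map (pathQ Q q m (k + 1) ≫ eqToHom (congrArg Q h2) ≫ dd.f) ≫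
                s.pt.a := by
              show _ = (T : V ⥤ V).map ((pathQ Q q m k ≫ q (m + k)) ≫
                eqToHom (congrArg Q h2) ≫ dd.f) ≫ s.pt.a
              simp [Functor.map_comp, Category.assoc]
          _ = (T : V ⥤ V).map (e m) ≫ s.pt.a := by
              congr 1
              exact congrArg (fun x => (T : V ⥤ V).map x) (ih (k + 1) (show m + (k + 1) = n from h2))
          _ = v m ≫ e (m + 1) := (he3 m).symm
    have hfin : dd.f = e n := by
      have := S n 0 rfl
      simpa [pathQ] using this
    exact Monad.Algebra.Hom.ext' _ _ _ _ hfin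
end
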